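/- Soundness of Ax_BCL^{k,l,m,n}: fix natural numbers k, l, m, n with k ≤ m, l ≤ n and k, l even. For every Γ ⊆ For_BCL and A ∈ For_BCL, if Γ ⊢ A in Ax_BCL^{k,l,m,n}, then for every model ⟨v,R⟩ with R ∈ Rel^{k,l,m,n} in which every member of Γ is true, A is true. -/

import Mathlib

/-- Formulas of BCL: variables, negation, conjunction, disjunction, connexive implication. -/
inductive BForm : Type
  | var : ℕ → BForm
  | neg : BForm → BForm
  | conj : BForm → BForm → BForm
  | disj : BForm → BForm → BForm
  | imp : BForm → BForm → BForm
  deriving DecidableEq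

/-- Truth of a formula in a BCL model ⟨v, R⟩. -/
def bsat (v : ℕ → Bool) (R : BForm → BForm → Prop) : BForm → Prop
  | .var p => v p = true
  | .neg B => ¬ bsat v R B
  | .conj B C => bsat v R B ∧ bsat v R C
  | .disj B C => bsat v R B ∨ bsat v R C
  | .imp B C => (¬ bsat v R B ∨ bsat v R C) ∧ R B C

/-- Validity in a relation: true in ⟨v, R⟩ for every valuation v. -/
def bvalid (R : BForm → BForm → Prop) (A : BForm) : Prop :=
  ∀ v : ℕ → Bool, bsat v R A

def condA1 (R : BForm → BForm → Prop) : Prop := ∀ A, ¬ R A (.neg A)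
def condA2 (R : BForm → BForm → Prop) : Prop := ∀ A, ¬ R (.neg A) A
def condB0 (R : BForm → BForm → Prop) : Prop := ∀ A B, R A B → ¬ R A (.neg B)
def condB1 (R : BForm → BForm → Prop) : Prop :=
  ∀ A B, R (.imp A B) (.neg (.imp A (.neg B)))
def condB2 (R : BForm → BForm → Prop) : Prop :=
  ∀ A B, R (.imp A (.neg B)) (.neg (.imp A B))
def condCUN (R : BForm → BForm → Prop) : Prop := ∀ A B, R A B → R (.neg A) (.neg B)

/-- ¬^j A : the formula A prefixed by j negations. -/
def negs : ℕ → BForm → BForm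
  | 0, A => A
  | n + 1, A => .neg (negs n A)
/-- Material implication A ⊃ B, an abbreviation for ¬A ∨ B. -/
def bhimp (A B : BForm) : BForm := .disj (.neg A) B

/-- A is a substitution instance of a classical propositional tautology:
A evaluates to true under every Boolean valuation of formulas that treats
¬, ∧, ∨ classically (variables and →-formulas count as atoms). -/
def IsTautInst (A : BForm) : Prop :=
  ∀ e : BForm → Bool,
    (∀ B, e (.neg B) = !(e B)) →
    (∀ B C, e (.conj B C) = (e B && e C)) →
    (∀ B C, e (.disj B C) = (e B || e C)) →
    e A = true

/-- Axioms of Ax_BCL. -/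
inductive BAx : BForm → Prop
  | taut {A : BForm} : IsTautInst A → BAx A
  | a1 (A : BForm) : BAx (.neg (.imp A (.neg A)))
  | a2 (A : BForm) : BAx (.neg (.imp (.neg A) A))
  | b1 (A B : BForm) : BAx (.imp (.imp A B) (.neg (.imp A (.neg B))))
  | b2 (A B : BForm) : BAx (.imp (.imp A (.neg B)) (.neg (.imp A B)))
  | impAx (A B : BForm) : BAx (bhimp (.imp A B) (bhimp A B))

/-- Theorems of a Hilbert calculus with axioms Ax and modus ponens (for ⊃). -/
inductive BThm (Ax : BForm → Prop) : BForm → Prop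
  | ax {A : BForm} : Ax A → BThm Ax A
  | mp {A B : BForm} : BThm Ax A → BThm Ax (bhimp A B) → BThm Ax B

/-- Axioms of Ax_BCL-CUN : Ax_BCL plus (CUN1) and (CUN2). -/
inductive BAxCUN : BForm → Prop
  | base {A : BForm} : BAx A → BAxCUN A
  | cun1 (A B : BForm) :
      BAxCUN (bhimp (.imp A B) (.disj (.imp (.neg A) (.neg B)) (.conj (.neg A) B)))
  | cun2 (A B : BForm) :
      BAxCUN (bhimp (.imp A B) (.imp (.neg (.neg A)) (.neg (.neg B))))

/-- Axioms of Ax_BCL^{k,l,m,n} : Ax_BCL-CUN plus (GCUN1) and (GCUN2). -/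
inductive GAx (k l m n : ℕ) : BForm → Prop
  | base {A : BForm} : BAxCUN A → GAx k l m n A
  | gcun1 (A B : BForm) :
      GAx k l m n (bhimp (.imp (negs k A) (negs l B))
        (.disj (.imp (negs m A) (negs n B)) (.conj (negs m A) (negs (n + 1) B))))
  | gcun2 (A B : BForm) :
      GAx k l m n (bhimp (.imp (negs k A) (negs l B))
        (.imp (negs (2 * m - k) A) (negs (2 * n - l) B)))

/-- Derivability from a set of premises Γ by axioms and modus ponens. -/
inductive BDeriv (Ax : BForm → Prop) (Γ : Set BForm) : BForm → Prop
  | ax {A : BForm} : Ax A → BDeriv Ax Γ A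
  | prem {A : BForm} : A ∈ Γ → BDeriv Ax Γ A
  | mp {A B : BForm} : BDeriv Ax Γ A → BDeriv Ax Γ (bhimp A B) → BDeriv Ax Γ B

/-- The class Rel^{k,l,m,n}: relations satisfying (a1), (a2), (b0), (b1), (b2),
(cun) and cun_{k,l,m,n}. -/
def RelKLMN (k l m n : ℕ) (R : BForm → BForm → Prop) : Prop :=
  condA1 R ∧ condA2 R ∧ condB0 R ∧ condB1 R ∧ condB2 R ∧ condCUN R ∧
    ∀ A B, R (negs k A) (negs l B) → R (negs m A) (negs n B)

/-- Γ is consistent in the calculus with axioms Ax. -/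
def BConsistent (Ax : BForm → Prop) (Γ : Set BForm) : Prop :=
  ∃ A, ¬ BDeriv Ax Γ A

/-- Γ is maximal consistent in the calculus with axioms Ax. -/
def BMaxCon (Ax : BForm → Prop) (Γ : Set BForm) : Prop :=
  BConsistent Ax Γ ∧ ∀ Δ : Set BForm, Γ ⊂ Δ → ¬ BConsistent Ax Δ

/-- Valuation of the first canonical model of Γ : v(p) = 1 iff p ∈ Γ. -/
noncomputable def canonV (Γ : Set BForm) : ℕ → Bool :=
  fun p => @decide (BForm.var p ∈ Γ) (Classical.propDecidable _)

/-- Relating relation of the first canonical model of Γ : R(A,B) iff A→B ∈ Γ. -/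
def canonR (Γ : Set BForm) : BForm → BForm → Prop :=
  fun A B => BForm.imp A B ∈ Γ

/-- The relating relation R^¬ of the second canonical model of Γ : the least
relation containing the relation induced by the first canonical model
and closed under the (GCUN)- and (CUN)-style clauses. -/
inductive canonR2 (k l m n : ℕ) (Γ : Set BForm) : BForm → BForm → Prop
  | base {A B : BForm} :
      bsat (canonV Γ) (canonR Γ) (.imp A B) → canonR2 k l m n Γ A B
  | gcun {A B : BForm} :
      bsat (canonV Γ) (canonR Γ) (.imp (negs k A) (negs l B)) →
      bsat (canonV Γ) (canonR Γ) (.conj (negs m A) (negs (n + 1) B)) →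
      canonR2 k l m n Γ (negs m A) (negs n B)
  | cun {A B : BForm} :
      bsat (canonV Γ) (canonR Γ) (.imp A B) →
      bsat (canonV Γ) (canonR Γ) (.conj (.neg A) B) →
      canonR2 k l m n Γ (.neg A) (.neg B)

/-!
Soundness is proved by induction on derivations: modus ponens preserves truth, and each axiom
is true in every model whose relation lies in Rel^{k,l,m,n}. For the generalised axioms the
relational half comes from applying cun_{k,l,m,n} twice, to A, B and then to ¬^{m-k} A,
¬^{n-l} B; the truth-functional half only needs ¬^j A to depend on the parity of j, and
2m - k has the parity of k.
-/

theorem negs_negs (i j : ℕ) (A : BForm) : negs i (negs j A) = negs (i + j) A := by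
  induction i with
  | zero => simp [negs]
  | succ i ih => rw [Nat.add_right_comm, negs, ih, negs]

section Semantics

variable {v : ℕ → Bool} {R : BForm → BForm → Prop}

theorem bsat_bhimp {A B : BForm} : bsat v R (bhimp A B) ↔ (bsat v R A → bsat v R B) := by
  simp only [bhimp, bsat, imp_iff_not_or]

theorem bsat_imp {A B : BForm} :
    bsat v R (.imp A B) ↔ (bsat v R A → bsat v R B) ∧ R A B := by
  simp only [bsat, imp_iff_not_or]

theorem bsat_negs (j : ℕ) (A : BForm) : bsat v R (negs j A) ↔ (Even j ↔ bsat v R A) := by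
  induction j with
  | zero => simp [negs]
  | succ j ih => simp only [negs, bsat, ih, Nat.even_add_one]; tauto

theorem bsat_negs_iff_of_even_iff {i j : ℕ} (hij : Even i ↔ Even j) (A : BForm) :
    bsat v R (negs i A) ↔ bsat v R (negs j A) := by
  rw [bsat_negs, bsat_negs, hij]

theorem bsat_of_isTautInst {A : BForm} (hA : IsTautInst A) : bsat v R A := by
  classical
  simpa using hA (fun B => decide (bsat v R B))
    (fun B => by by_cases hB : bsat v R B <;> simp [bsat, hB])
    (fun B C => by by_cases hB : bsat v R B <;> simp [bsat, hB])
    (fun B C => by by_cases hB : bsat v R B <;> simp [bsat, hB])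

theorem bsat_of_bAx (ha1 : condA1 R) (ha2 : condA2 R) (hb0 : condB0 R) (hb1 : condB1 R)
    (hb2 : condB2 R) {A : BForm} (hA : BAx A) : bsat v R A := by
  cases hA with
  | taut h => exact bsat_of_isTautInst h
  | a1 A => exact fun h => ha1 A h.2
  | a2 A => exact fun h => ha2 A h.2
  | b1 A B => exact bsat_imp.2 ⟨fun h h' => hb0 A B h.2 h'.2, hb1 A B⟩
  | b2 A B => exact bsat_imp.2 ⟨fun h h' => hb0 A B h'.2 h.2, hb2 A B⟩
  | impAx A B => exact bsat_bhimp.2 fun h => bsat_bhimp.2 (bsat_imp.1 h).1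

theorem bsat_of_bAxCUN (ha1 : condA1 R) (ha2 : condA2 R) (hb0 : condB0 R) (hb1 : condB1 R)
    (hb2 : condB2 R) (hcun : condCUN R) {A : BForm} (hA : BAxCUN A) : bsat v R A := by
  cases hA with
  | base h => exact bsat_of_bAx ha1 ha2 hb0 hb1 hb2 h
  | cun1 A B =>
    refine bsat_bhimp.2 fun h => ?_
    have hR := hcun A B h.2
    simp only [bsat] at h ⊢
    tauto
  | cun2 A B =>
    refine bsat_bhimp.2 fun h => bsat_imp.2 ⟨?_, hcun _ _ (hcun A B h.2)⟩
    simpa only [bsat, not_not] using (bsat_imp.1 h).1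

theorem rel_negs_of_cun {k l m n : ℕ} (hkm : k ≤ m) (hln : l ≤ n)
    (hR : ∀ A B, R (negs k A) (negs l B) → R (negs m A) (negs n B)) {A B : BForm}
    (hAB : R (negs k A) (negs l B)) : R (negs (2 * m - k) A) (negs (2 * n - l) B) := by
  have h := hR (negs (m - k) A) (negs (n - l) B)
  rw [negs_negs, negs_negs, negs_negs, negs_negs, Nat.add_sub_cancel' hkm,
    Nat.add_sub_cancel' hln, ← Nat.add_sub_assoc hkm, ← Nat.add_sub_assoc hln, ← two_mul,
    ← two_mul] at h
  exact h (hR A B hAB)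

theorem bsat_of_gAx {k l m n : ℕ} (hkm : k ≤ m) (hln : l ≤ n) (hR : RelKLMN k l m n R)
    {A : BForm} (hA : GAx k l m n A) : bsat v R A := by
  obtain ⟨ha1, ha2, hb0, hb1, hb2, hcun, hklmn⟩ := hR
  cases hA with
  | base h => exact bsat_of_bAxCUN ha1 ha2 hb0 hb1 hb2 hcun h
  | gcun1 A B =>
    refine bsat_bhimp.2 fun h => ?_
    have hR := hklmn A B h.2
    simp only [bsat] at h ⊢
    tauto
  | gcun2 A B =>
    refine bsat_bhimp.2 fun h => bsat_imp.2 ⟨?_, rel_negs_of_cun hkm hln hklmn h.2⟩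
    have parity {i j : ℕ} (hij : i ≤ j) : Even (2 * j - i) ↔ Even i := by
      simp [Nat.even_sub (show i ≤ 2 * j by omega)]
    rw [bsat_negs_iff_of_even_iff (parity hkm), bsat_negs_iff_of_even_iff (parity hln)]
    exact (bsat_imp.1 h).1

end Semantics

theorem gbcl_soundness_general (k l m n : ℕ) (hkm : k ≤ m) (hln : l ≤ n)
    (Γ : Set BForm) (A : BForm)
    (h : BDeriv (GAx k l m n) Γ A) :
    ∀ (v : ℕ → Bool) (R : BForm → BForm → Prop), RelKLMN k l m n R →
      (∀ B ∈ Γ, bsat v R B) → bsat v R A := by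
  intro v R hR hΓ
  induction h with
  | ax hA => exact bsat_of_gAx hkm hln hR hA
  | prem hA => exact hΓ _ hA
  | mp _ _ ihA ihAB => exact bsat_bhimp.1 ihAB ihA

/-- Soundness of Ax_BCL^{k,l,m,n}: whatever is derivable from Γ is a semantic
consequence of Γ over models based on relations in Rel^{k,l,m,n}. -/
theorem gbcl_soundness (k l m n : ℕ) (hkm : k ≤ m) (hln : l ≤ n)
    (hk : Even k) (hl : Even l) (Γ : Set BForm) (A : BForm)
    (h : BDeriv (GAx k l m n) Γ A) :
    ∀ (v : ℕ → Bool) (R : BForm → BForm → Prop), RelKLMN k l m n R →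
      (∀ B ∈ Γ, bsat v R B) → bsat v R A :=
  gbcl_soundness_general k l m n hkm hln Γ A h
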